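/- Let b, m, n, r ∈ ℕ with r ≥ 1, n ≥ r + b, n ≥ 2b, and with m ≥ r − b + 1 if b ≥ 1 and m ≥ r if b = 0. Then |T(m,n,b)_r| = |T(m,n,b)_{r−1}| + |MP_b(r)|; in particular this difference of tableau counts is independent of m and n in this range. -/

import Mathlib

open scoped BigOperators

/-- The set of semistandard Young tableaux of the two-row shape `(n-k, k)` with entries in
`{0, 1, …, m}` whose entries sum to `r`: a tableau is recorded as the pair of its two rows,
weakly increasing along rows and strictly increasing down the (first `k`) columns. -/
def TwoRowSSYT (m n k r : ℕ) : Set ((Fin (n - k) → ℕ) × (Fin k → ℕ)) :=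
  {t | Monotone t.1 ∧ Monotone t.2 ∧
    (∀ (j : ℕ) (hk : j < k) (hnk : j < n - k), t.1 ⟨j, hnk⟩ < t.2 ⟨j, hk⟩) ∧
    (∀ i, t.1 i ≤ m) ∧ (∀ j, t.2 j ≤ m) ∧
    ((∑ i, t.1 i) + (∑ j, t.2 j) = r)}

/-- `PPset b m r` is the set of pairs `(γ, π)` of partitions (recorded as multisets of positive
natural numbers) such that `γ` has exactly `b` parts, all parts of `γ` and `π` are at most `m`,
and `|γ| + |π| = r`. -/
def PPset (b m r : ℕ) : Set (Multiset ℕ × Multiset ℕ) :=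
  {p | (∀ x ∈ p.1, 0 < x) ∧ (∀ x ∈ p.2, 0 < x) ∧
    Multiset.card p.1 = b ∧ (∀ x ∈ p.1, x ≤ m) ∧ (∀ x ∈ p.2, x ≤ m) ∧
    p.1.sum + p.2.sum = r}

/-- `MPset b r` is the set of `b`-marked partitions of `r`: pairs `(γ, ε)` of partitions
(multisets of positive natural numbers) with `γ` having exactly `b` parts, `ε` having no parts
equal to `1`, and `|γ| + |ε| = r`. -/
def MPset (b r : ℕ) : Set (Multiset ℕ × Multiset ℕ) :=
  {p | (∀ x ∈ p.1, 0 < x) ∧ (∀ x ∈ p.2, 0 < x) ∧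
    Multiset.card p.1 = b ∧ (∀ x ∈ p.2, x ≠ 1) ∧
    p.1.sum + p.2.sum = r}

/-- `MPmset M b r` is the subset of `MPset b r` of those `(γ, ε)` all of whose parts are
at most `M`. -/
def MPmset (M b r : ℕ) : Set (Multiset ℕ × Multiset ℕ) :=
  {p | p ∈ MPset b r ∧ (∀ x ∈ p.1, x ≤ M) ∧ (∀ x ∈ p.2, x ≤ M)}

/-!
For `n` and `m` large compared with `r`, a two-row tableau of shape `(n - b, b)` and weight `r`
is determined by its second row `γ`, a partition with exactly `b` parts (they are positive since
they lie strictly below entries of the first row), together with the partition `λ` of the nonzero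
entries of its first row: since `n ≥ r + b`, the first row has at least `b` zeros, so every column
condition holds, and the bound on `m` is never reached. Hence `|T(m,n,b)_r|` counts the pairs
`(γ, λ)` with `|γ| + |λ| = r`. Those in which `λ` has a part `1` correspond to the pairs of weight
`r - 1` by removing that part, and the others are exactly the `b`-marked partitions of `r`.
-/

def partitionPairs (b r : ℕ) : Set (Multiset ℕ × Multiset ℕ) :=
  {p | (∀ x ∈ p.1, 0 < x) ∧ (∀ x ∈ p.2, 0 < x) ∧
    Multiset.card p.1 = b ∧ p.1.sum + p.2.sum = r}

namespace Multiset

lemma card_le_sum_of_pos {s : Multiset ℕ} (hs : ∀ x ∈ s, 0 < x) : card s ≤ s.sum := by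
  simpa using card_nsmul_le_sum (a := 1) hs

lemma add_card_le_sum_add_one_of_pos {s : Multiset ℕ} (hs : ∀ x ∈ s, 0 < x) {x : ℕ}
    (hx : x ∈ s) : x + card s ≤ s.sum + 1 := by
  rw [← cons_erase hx] at hs ⊢
  have := card_le_sum_of_pos fun y hy => hs y (mem_cons_of_mem hy)
  rw [card_cons, sum_cons]
  omega

lemma sum_filter_ne_zero {M : Type*} [AddCommMonoid M] [DecidableEq M] (s : Multiset M) :
    (s.filter (· ≠ 0)).sum = s.sum := by
  conv_rhs => rw [← filter_add_not (· ≠ 0) s]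
  rw [sum_add, sum_eq_zero fun x hx => not_not.mp (mem_filter.mp hx).2, add_zero]

lemma count_add_card_filter_ne {α : Type*} [DecidableEq α] (a : α) (s : Multiset α) :
    count a s + card (s.filter (· ≠ a)) = card s := by
  rw [← countP_eq_card_filter, count, card_eq_countP_add_countP (a = ·) s]
  simp [eq_comm]

lemma eq_of_filter_ne_eq_of_card_eq {α : Type*} [DecidableEq α] {a : α} {s t : Multiset α}
    (h : s.filter (· ≠ a) = t.filter (· ≠ a)) (hc : card s = card t) : s = t := by
  ext x
  rcases eq_or_ne x a with rfl | hx
  · have hs := count_add_card_filter_ne x s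
    have ht := count_add_card_filter_ne x t
    rw [h] at hs
    omega
  · rw [← count_filter_of_pos (p := (· ≠ a)) hx, h, count_filter_of_pos (p := (· ≠ a)) hx]

lemma sum_sort {α : Type*} [LinearOrder α] [AddCommMonoid α] (s : Multiset α) :
    (s.sort (· ≤ ·)).sum = s.sum := by
  rw [← sum_coe, sort_eq]

lemma sortedLE_replicate_zero_append_sort (c : ℕ) (s : Multiset ℕ) :
    (List.replicate c 0 ++ s.sort (· ≤ ·)).SortedLE := by
  rw [List.sortedLE_iff_pairwise, List.pairwise_append]
  exact ⟨List.pairwise_replicate.mpr (.inr le_rfl), pairwise_sort .., by simp +contextual⟩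

lemma finite_setOf_pos_sum_le (N : ℕ) :
    {s : Multiset ℕ | (∀ x ∈ s, 0 < x) ∧ s.sum ≤ N}.Finite := by
  refine ((Set.finite_Iic N).biUnion fun k _ =>
    Set.finite_range (Nat.Partition.parts (n := k))).subset ?_
  rintro s ⟨hpos, hsum⟩
  exact Set.mem_biUnion (Set.mem_Iic.mpr hsum) ⟨⟨s, hpos _, rfl⟩, rfl⟩

end Multiset

lemma eq_of_monotone_of_coe_ofFn_eq {α : Type*} [LinearOrder α] {k : ℕ} {f g : Fin k → α}
    (hf : Monotone f) (hg : Monotone g) (h : (List.ofFn f : Multiset α) = List.ofFn g) :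
    f = g :=
  List.ofFn_injective <| (Multiset.coe_eq_coe.mp h).eq_of_sortedLE
    (List.sortedLE_ofFn_iff.mpr hf) (List.sortedLE_ofFn_iff.mpr hg)

lemma exists_ofFn_eq {α : Type*} (l : List α) {k : ℕ} (hk : l.length = k) :
    ∃ f : Fin k → α, List.ofFn f = l := by
  subst hk
  exact ⟨l.get, List.ofFn_get l⟩

def rowsToPartitionPair {k l : ℕ} (t : (Fin k → ℕ) × (Fin l → ℕ)) :
    Multiset ℕ × Multiset ℕ :=
  (List.ofFn t.2, (List.ofFn t.1 : Multiset ℕ).filter (· ≠ 0))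

section TwoRowSSYT

variable {m n b s : ℕ}

lemma mapsTo_rowsToPartitionPair (hb : b < n) :
    Set.MapsTo rowsToPartitionPair (TwoRowSSYT m n b s) (partitionPairs b s) := by
  rintro ⟨t₁, t₂⟩ ⟨-, hmono₂, hcol, -, -, hsum⟩
  dsimp only at hcol hsum
  simp only [rowsToPartitionPair, partitionPairs, Set.mem_ofPred_eq]
  refine ⟨?_, fun x hx => Nat.pos_of_ne_zero (Multiset.mem_filter.mp hx).2, by simp, ?_⟩
  · simp only [Multiset.mem_coe, List.mem_ofFn]
    rintro _ ⟨j, rfl⟩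
    have hb₀ : 0 < b := j.pos
    exact (Nat.zero_le _).trans_lt
      ((hcol 0 hb₀ (by omega)).trans_le (hmono₂ (show ⟨0, hb₀⟩ ≤ j from Nat.zero_le _)))
  · rw [Multiset.sum_filter_ne_zero, Multiset.sum_coe, Multiset.sum_coe, List.sum_ofFn,
      List.sum_ofFn]
    omega

lemma injOn_rowsToPartitionPair :
    Set.InjOn rowsToPartitionPair (TwoRowSSYT m n b s) := by
  rintro ⟨t₁, t₂⟩ ⟨ht₁, ht₂, -⟩ ⟨u₁, u₂⟩ ⟨hu₁, hu₂, -⟩ h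
  simp only [rowsToPartitionPair, Prod.mk.injEq] at h
  exact Prod.ext
    (eq_of_monotone_of_coe_ofFn_eq ht₁ hu₁
      (Multiset.eq_of_filter_ne_eq_of_card_eq h.2 (by simp)))
    (eq_of_monotone_of_coe_ofFn_eq ht₂ hu₂ h.1)

lemma mem_TwoRowSSYT_of_ofFn_eq_sort {γ lam : Multiset ℕ} (hp : (γ, lam) ∈ partitionPairs b s)
    (hs : s + b ≤ n) (hm₁ : s ≤ m + b) (hm₂ : 1 ≤ b → s + 1 ≤ m + b)
    {t₁ : Fin (n - b) → ℕ} {t₂ : Fin b → ℕ}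
    (hrow₁ : List.ofFn t₁ = List.replicate (n - b - Multiset.card lam) 0 ++ lam.sort (· ≤ ·))
    (hrow₂ : List.ofFn t₂ = γ.sort (· ≤ ·)) :
    (t₁, t₂) ∈ TwoRowSSYT m n b s := by
  obtain ⟨hγ, hlam, hcard, hsum⟩ := hp
  dsimp only at hγ hlam hcard hsum
  have hγsum := Multiset.card_le_sum_of_pos hγ
  have hlamsum := Multiset.card_le_sum_of_pos hlam
  have hmem₁ (i : Fin (n - b)) : t₁ i = 0 ∨ t₁ i ∈ lam := by
    have : t₁ i ∈ List.ofFn t₁ := List.mem_ofFn.mpr ⟨i, rfl⟩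
    simp only [hrow₁, List.mem_append, List.mem_replicate, Multiset.mem_sort] at this
    tauto
  have hmem₂ (j : Fin b) : t₂ j ∈ γ :=
    (Multiset.mem_sort _).mp (hrow₂ ▸ List.mem_ofFn.mpr ⟨j, rfl⟩)
  refine ⟨?_, ?_, ?_, fun i => ?_, fun j => ?_, ?_⟩
  · exact List.sortedLE_ofFn_iff.mp (hrow₁ ▸ Multiset.sortedLE_replicate_zero_append_sort ..)
  · rw [← List.sortedLE_ofFn_iff, hrow₂, List.sortedLE_iff_pairwise]
    exact Multiset.pairwise_sort ..
  · intro j hjb hjn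
    have hzero : t₁ ⟨j, hjn⟩ = 0 := by
      rw [← List.getElem_ofFn (f := t₁) (by simpa using hjn), List.getElem_of_eq hrow₁,
        List.getElem_append_left (by rw [List.length_replicate]; omega), List.getElem_replicate]
    show t₁ _ < t₂ _
    rw [hzero]
    exact hγ _ (hmem₂ _)
  · show t₁ i ≤ m
    rcases hmem₁ i with h | h
    · omega
    · have := Multiset.le_sum_of_mem h
      omega
  · show t₂ j ≤ m
    have := Multiset.add_card_le_sum_add_one_of_pos hγ (hmem₂ j)
    have := hm₂ j.pos
    omega
  · show ∑ i, t₁ i + ∑ j, t₂ j = s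
    rw [← List.sum_ofFn, ← List.sum_ofFn, hrow₁, hrow₂]
    simp only [List.sum_append, List.sum_replicate, smul_zero, zero_add, Multiset.sum_sort]
    omega

lemma rowsToPartitionPair_eq_of_ofFn_eq_sort {k l c : ℕ} {γ lam : Multiset ℕ}
    (hlam : ∀ x ∈ lam, 0 < x) {t₁ : Fin k → ℕ} {t₂ : Fin l → ℕ}
    (hrow₁ : List.ofFn t₁ = List.replicate c 0 ++ lam.sort (· ≤ ·))
    (hrow₂ : List.ofFn t₂ = γ.sort (· ≤ ·)) :
    rowsToPartitionPair (t₁, t₂) = (γ, lam) := by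
  simp only [rowsToPartitionPair, hrow₁, hrow₂, Multiset.sort_eq, ← Multiset.coe_add,
    Multiset.coe_replicate, Multiset.filter_add]
  rw [Multiset.filter_eq_nil.mpr fun x hx => by simp [Multiset.eq_of_mem_replicate hx],
    Multiset.filter_eq_self.mpr fun x hx => (hlam x hx).ne', zero_add]

lemma surjOn_rowsToPartitionPair (hs : s + b ≤ n) (hm₁ : s ≤ m + b)
    (hm₂ : 1 ≤ b → s + 1 ≤ m + b) :
    Set.SurjOn rowsToPartitionPair (TwoRowSSYT m n b s) (partitionPairs b s) := by
  rintro ⟨γ, lam⟩ hp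
  obtain ⟨-, hlam, hcard, hsum⟩ := id hp
  dsimp only at hlam hcard hsum
  have := Multiset.card_le_sum_of_pos hlam
  obtain ⟨t₁, hrow₁⟩ :=
    exists_ofFn_eq (List.replicate (n - b - Multiset.card lam) 0 ++ lam.sort (· ≤ ·)) (k := n - b)
      (by simp only [List.length_append, List.length_replicate, Multiset.length_sort]; omega)
  obtain ⟨t₂, hrow₂⟩ := exists_ofFn_eq (γ.sort (· ≤ ·)) (k := b) (by simp [hcard])
  exact ⟨(t₁, t₂), mem_TwoRowSSYT_of_ofFn_eq_sort hp hs hm₁ hm₂ hrow₁ hrow₂,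
    rowsToPartitionPair_eq_of_ofFn_eq_sort hlam hrow₁ hrow₂⟩

lemma ncard_TwoRowSSYT_eq_ncard_partitionPairs (hb : b < n) (hs : s + b ≤ n)
    (hm₁ : s ≤ m + b) (hm₂ : 1 ≤ b → s + 1 ≤ m + b) :
    (TwoRowSSYT m n b s).ncard = (partitionPairs b s).ncard :=
  Set.BijOn.ncard_eq ⟨mapsTo_rowsToPartitionPair hb, injOn_rowsToPartitionPair,
    surjOn_rowsToPartitionPair hs hm₁ hm₂⟩

end TwoRowSSYT

lemma finite_partitionPairs (b r : ℕ) : (partitionPairs b r).Finite :=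
  ((Multiset.finite_setOf_pos_sum_le r).prod (Multiset.finite_setOf_pos_sum_le r)).subset
    fun _ ⟨hγ, hlam, _, hsum⟩ => ⟨⟨hγ, by omega⟩, hlam, by omega⟩

lemma MPset_eq_partitionPairs_sdiff (b r : ℕ) :
    MPset b r = partitionPairs b r \ {p | 1 ∈ p.2} := by
  ext ⟨γ, lam⟩
  simp only [MPset, partitionPairs, Set.mem_sdiff, Set.mem_ofPred_eq]
  constructor
  · rintro ⟨hγ, hlam, hcard, hne, hsum⟩
    exact ⟨⟨hγ, hlam, hcard, hsum⟩, fun h => hne 1 h rfl⟩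
  · rintro ⟨⟨hγ, hlam, hcard, hsum⟩, h⟩
    exact ⟨hγ, hlam, hcard, fun x hx hx1 => h (hx1 ▸ hx), hsum⟩

lemma image_cons_one_partitionPairs (b r : ℕ) :
    Prod.map id (1 ::ₘ ·) '' partitionPairs b r = partitionPairs b (r + 1) ∩ {p | 1 ∈ p.2} := by
  ext p
  constructor
  · rintro ⟨⟨γ, lam⟩, ⟨hγ, hlam, hcard, hsum⟩, rfl⟩
    refine ⟨⟨hγ, ?_, hcard, ?_⟩, Multiset.mem_cons_self 1 lam⟩
    · simpa using hlam
    · simp only [Prod.map, id, Multiset.sum_cons] at hsum ⊢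
      omega
  · obtain ⟨γ, lam⟩ := p
    rintro ⟨⟨hγ, hlam, hcard, hsum⟩, h1 : 1 ∈ lam⟩
    have hsum' := Multiset.sum_cons 1 (lam.erase 1)
    rw [Multiset.cons_erase h1] at hsum'
    refine ⟨(γ, lam.erase 1), ⟨hγ, fun x hx => hlam x (Multiset.mem_of_mem_erase hx), hcard,
      by dsimp only at hsum ⊢; omega⟩, ?_⟩
    simp [Multiset.cons_erase h1]

lemma ncard_partitionPairs_succ (b r : ℕ) :
    (partitionPairs b (r + 1)).ncard = (partitionPairs b r).ncard + (MPset b (r + 1)).ncard := by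
  rw [MPset_eq_partitionPairs_sdiff,
    ← Set.ncard_inter_add_ncard_sdiff_eq_ncard _ {p | 1 ∈ p.2} (finite_partitionPairs b (r + 1)),
    ← image_cons_one_partitionPairs, Set.ncard_image_of_injective _
      (Function.injective_id.prodMap fun _ _ => (Multiset.cons_inj_right 1).mp)]

theorem twoRowSSYT_card_eq_card_add_MP_card_general (b m n r : ℕ)
    (hr : 1 ≤ r) (h2 : r + b ≤ n)
    (hm0 : b = 0 → r ≤ m) (hm1 : 1 ≤ b → r + 1 ≤ m + b) :
    (TwoRowSSYT m n b r).ncard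
      = (TwoRowSSYT m n b (r - 1)).ncard + (MPset b r).ncard := by
  obtain ⟨r, rfl⟩ : ∃ k, r = k + 1 := ⟨r - 1, by omega⟩
  have hm : r + 1 ≤ m + b := by
    rcases Nat.eq_zero_or_pos b with hb | hb
    · have := hm0 hb
      omega
    · have := hm1 hb
      omega
  rw [Nat.add_sub_cancel, ncard_TwoRowSSYT_eq_ncard_partitionPairs (by omega) h2 hm hm1,
    ncard_TwoRowSSYT_eq_ncard_partitionPairs (by omega) (by omega) (by omega)
      (fun hb => by have := hm1 hb; omega),
    ncard_partitionPairs_succ]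

/-- For `r ≥ 1`, `n ≥ r + b`, `n ≥ 2b`, and `m ≥ r − b + 1` if
`b ≥ 1` (in the integers: `m + b ≥ r + 1`), respectively `m ≥ r` if `b = 0`, one has
`|T(m,n,b)_r| = |T(m,n,b)_{r−1}| + |MP_b(r)|`; in particular this difference of tableau
counts is independent of `m` and `n` in this range. -/
theorem twoRowSSYT_card_eq_card_add_MP_card (b m n r : ℕ)
    (hr : 1 ≤ r) (h2 : r + b ≤ n) (h3 : 2 * b ≤ n)
    (hm0 : b = 0 → r ≤ m) (hm1 : 1 ≤ b → r + 1 ≤ m + b) :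
    (TwoRowSSYT m n b r).ncard
      = (TwoRowSSYT m n b (r - 1)).ncard + (MPset b r).ncard :=
  twoRowSSYT_card_eq_card_add_MP_card_general b m n r hr h2 hm0 hm1
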